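/- Let (M,c) be a coloured binary matroid with r(M) ≥ 3 and ε(M) = 2(r(M)+1), where c is 2-uniform (every colour class has exactly two elements) and at least three colour classes consist of two non-parallel elements. If M contains a rainbow 2-circuit (two parallel elements of distinct colours), then M contains two disjoint rainbow circuits C_1, C_2 with |C_1| + |C_2| ≤ r(M) + 2. -/

import Mathlib

open Matroid
open scoped symmDiff Classical

namespace RainbowPaper

variable {α : Type*} {κ : Type*}

/-- A circuit of a matroid: a minimal dependent set. -/
def Circuit (M : Matroid α) (C : Set α) : Prop :=
  M.Dep C ∧ ∀ D, D ⊂ C → ¬ M.Dep D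

/-- The rank of a set in a matroid: the supremum of the cardinalities of its
independent subsets. -/
noncomputable def rkSet (M : Matroid α) (X : Set α) : ℕ :=
  sSup {n | ∃ I, M.Indep I ∧ I ⊆ X ∧ I.ncard = n}

/-- The rank of a matroid. -/
noncomputable def rk (M : Matroid α) : ℕ := rkSet M M.E

/-- A matroid is simple if every subset of the ground set with at most two
elements is independent (no loops, no parallel pairs). -/
def Simple (M : Matroid α) : Prop := ∀ X ⊆ M.E, X.ncard ≤ 2 → M.Indep X

/-- A matroid is binary if it is representable over `GF(2)`. -/
def IsBinary (M : Matroid α) : Prop :=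
  ∃ (n : ℕ) (φ : α → (Fin n → ZMod 2)),
    ∀ I ⊆ M.E, (M.Indep I ↔ LinearIndependent (ZMod 2) (fun e : I => φ e.1))

/-- A matroid is regular if it is representable over every field. -/
def IsRegular (M : Matroid α) : Prop :=
  ∀ (F : Type) [Field F], ∃ (n : ℕ) (φ : α → (Fin n → F)),
    ∀ I ⊆ M.E, (M.Indep I ↔ LinearIndependent F (fun e : I => φ e.1))

/-- The signed incidence vector of an edge with given endpoints. -/
noncomputable def incVec {V : Type} (p : V × V) : V → ℚ :=
  fun v => (if v = p.1 then (1 : ℚ) else 0) - (if v = p.2 then (1 : ℚ) else 0)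

/-- A matroid is graphic if it is the cycle matroid of a graph, equivalently it is
represented by the signed incidence vectors of the edges of some graph. -/
def IsGraphic (M : Matroid α) : Prop :=
  ∃ (V : Type) (ends : α → V × V),
    ∀ I ⊆ M.E, (M.Indep I ↔ LinearIndependent ℚ (fun e : I => incVec (ends e.1)))

/-- A matroid is cographic if its dual is graphic. -/
def IsCographic (M : Matroid α) : Prop := IsGraphic M✶

/-- The colour class of the colour `s` in the coloured matroid `(M, c)`. -/
def colourClass (M : Matroid α) (c : α → κ) (s : κ) : Set α := {e ∈ M.E | c e = s}

/-- A rainbow circuit: a circuit on which the colouring is injective. -/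
def RainbowCircuit (M : Matroid α) (c : α → κ) (C : Set α) : Prop :=
  Circuit M C ∧ Set.InjOn c C

/-- A coloured matroid is circuit-achromatic if it has no rainbow circuit. -/
def CircuitAchromatic (M : Matroid α) (c : α → κ) : Prop :=
  ∀ C, Circuit M C → ¬ Set.InjOn c C

/-- The union of the first `j` colour classes in an enumeration `f` of the colours. -/
def initialUnion (M : Matroid α) (c : α → κ) {k : ℕ} (f : Fin k → κ) (j : Fin k) : Set α :=
  ⋃ i ∈ Set.Iic j, colourClass M c (f i)

/-- A colouring of a matroid is stratified if its (nonempty) colour classes can be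
enumerated `X_{i_1}, …, X_{i_k}` so that each initial union
`S_j = X_{i_1} ∪ ⋯ ∪ X_{i_j}` is closed and `1 ≤ r(S_1) < r(S_2) < ⋯ < r(S_k) = r(M)`. -/
def Stratified (M : Matroid α) (c : α → κ) : Prop :=
  ∃ (k : ℕ) (f : Fin k → κ),
    Function.Injective f ∧
    (∀ e ∈ M.E, ∃ j, c e = f j) ∧
    (∀ j, (colourClass M c (f j)).Nonempty) ∧
    (∀ j, M.closure (initialUnion M c f j) = initialUnion M c f j) ∧
    StrictMono (fun j => rkSet M (initialUnion M c f j)) ∧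
    (∀ j, 1 ≤ rkSet M (initialUnion M c f j)) ∧
    (∀ j : Fin k, j.val = k - 1 → rkSet M (initialUnion M c f j) = rk M)

/-- A short rainbow circuit pair: two disjoint rainbow circuits whose sizes sum
to at most `r(M) + 2`. -/
def SRCP (M : Matroid α) (c : α → κ) (C₁ C₂ : Set α) : Prop :=
  RainbowCircuit M c C₁ ∧ RainbowCircuit M c C₂ ∧ Disjoint C₁ C₂ ∧
    C₁.ncard + C₂.ncard ≤ rk M + 2

/-- A short rainbow circuit 4-tuple: four rainbow circuits of total size at most
`2 r(M) + 4` such that no element belongs to more than two of them. -/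
def SRC4 (M : Matroid α) (c : α → κ) (C : Fin 4 → Set α) : Prop :=
  (∀ i, RainbowCircuit M c (C i)) ∧
  (∑ i, (C i).ncard) ≤ 2 * rk M + 4 ∧
  (∀ e : α, (Finset.univ.filter (fun i => e ∈ C i)).card ≤ 2)

/-!
Let `D` be the rainbow 2-circuit and `{x, y}` one of the non-parallel colour classes whose colour
does not occur on `D`. Choosing, in each of the other `r(M)` colour classes, an element outside `D`
gives a rainbow set `R` with `|R| = r(M)`. Both `R + x` and `R + y` are rainbow of size `r(M) + 1`,
hence contain rainbow circuits; one of size at most `r(M)` pairs with `D`. Otherwise `R + x` and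
`R + y` are both circuits. Over `GF(2)` the vectors of a circuit sum to zero, so `x` and `y` get the
same vector and `{x, y}` is dependent; as it is not a circuit, `x` or `y` is a loop, which is a
rainbow circuit of size one.
-/

open Set

lemma circuit_iff_isCircuit {M : Matroid α} {C : Set α} : Circuit M C ↔ M.IsCircuit C :=
  minimal_iff_forall_lt.symm

lemma ncard_le_rk_of_indep {M : Matroid α} (hfin : M.E.Finite) {I : Set α} (hI : M.Indep I) :
    I.ncard ≤ rk M := by
  refine le_csSup ⟨M.E.ncard, ?_⟩ ⟨I, hI, hI.subset_ground, rfl⟩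
  rintro n ⟨J, -, hJE, rfl⟩
  exact ncard_le_ncard hJE hfin

lemma dep_of_rk_lt_ncard {M : Matroid α} (hfin : M.E.Finite) {X : Set α} (hXE : X ⊆ M.E)
    (hX : rk M < X.ncard) : M.Dep X := by
  rw [← not_indep_iff]
  exact fun hI => (ncard_le_rk_of_indep hfin hI).not_gt hX

lemma exists_circuit_ssubset_of_dep {M : Matroid α} {X : Set α} (hX : M.Dep X)
    (hXc : ¬ Circuit M X) : ∃ C ⊂ X, Circuit M C := by
  obtain ⟨C, hCX, hC⟩ := hX.exists_isCircuit_subset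
  exact ⟨C, hCX.ssubset_of_ne (by rintro rfl; exact hXc (circuit_iff_isCircuit.2 hC)),
    circuit_iff_isCircuit.2 hC⟩

def IsBinaryRep {V : Type*} [AddCommGroup V] [Module (ZMod 2) V] (M : Matroid α)
    (φ : α → V) : Prop :=
  ∀ I ⊆ M.E, (M.Indep I ↔ LinearIndepOn (ZMod 2) φ I)

section binary

variable {V : Type*} [AddCommGroup V] [Module (ZMod 2) V] {M : Matroid α} {φ : α → V}

lemma IsBinaryRep.finsum_eq_zero_of_circuit (hφ : IsBinaryRep M φ) {C : Set α}
    (hC : Circuit M C) : ∑ᶠ a ∈ C, φ a = 0 := by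
  have hCE := hC.1.subset_ground
  obtain ⟨l, hlC, hl0, hl⟩ : ∃ l ∈ Finsupp.supported (ZMod 2) (ZMod 2) C,
      Finsupp.linearCombination (ZMod 2) φ l = 0 ∧ l ≠ 0 := by
    have := mt (hφ C hCE).2 hC.1.not_indep
    simpa [linearIndepOn_iff] using this
  -- the support of a linear dependency is dependent, so by minimality it is all of `C`
  have hsupp : (l.support : Set α) = C := by
    refine (Finsupp.mem_supported _ _).1 hlC |>.eq_of_not_ssubset fun hss => hl ?_
    have hI : M.Indep l.support := (not_dep_iff (hss.subset.trans hCE)).1 (hC.2 _ hss)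
    exact linearIndepOn_iff.1 ((hφ _ (hss.subset.trans hCE)).1 hI) l
      ((Finsupp.mem_supported _ _).2 subset_rfl) hl0
  have hone : ∀ a ∈ l.support, l a = 1 := fun a ha =>
    (by decide : ∀ z : ZMod 2, z ≠ 0 → z = 1) _ (Finsupp.mem_support_iff.1 ha)
  rw [← hsupp, finsum_mem_coe_finset, ← hl0, Finsupp.linearCombination_apply, Finsupp.sum]
  exact Finset.sum_congr rfl fun a ha => by rw [hone a ha, one_smul]

lemma IsBinaryRep.dep_pair_of_circuit_insert (hφ : IsBinaryRep M φ) {R : Set α} {x y : α}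
    (hR : R.Finite) (hxR : x ∉ R) (hyR : y ∉ R) (hxy : x ≠ y)
    (hx : Circuit M (insert x R)) (hy : Circuit M (insert y R)) : M.Dep {x, y} := by
  have hφxy : φ x = φ y := by
    have hsx := hφ.finsum_eq_zero_of_circuit hx
    have hsy := hφ.finsum_eq_zero_of_circuit hy
    rw [finsum_mem_insert _ hxR hR] at hsx
    rw [finsum_mem_insert _ hyR hR] at hsy
    exact add_right_cancel (hsx.trans hsy.symm)
  have hxyE : {x, y} ⊆ M.E := pair_subset (hx.1.subset_ground (mem_insert _ _))
    (hy.1.subset_ground (mem_insert _ _))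
  rw [← not_indep_iff]
  exact fun hI => hxy (((hφ _ hxyE).1 hI).injOn (by simp) (by simp) hφxy)

end binary

section rainbow

variable {M : Matroid α} {c : α → κ}

lemma exists_rainbowCircuit_subset_of_rk_lt (hfin : M.E.Finite) {X : Set α} (hXE : X ⊆ M.E)
    (hX : InjOn c X) (hXr : rk M < X.ncard) : ∃ C ⊆ X, RainbowCircuit M c C := by
  obtain ⟨C, hCX, hC⟩ := (dep_of_rk_lt_ncard hfin hXE hXr).exists_isCircuit_subset
  exact ⟨C, hCX, circuit_iff_isCircuit.2 hC, hX.mono hCX⟩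

lemma exists_short_rainbowCircuit_or_circuit (hfin : M.E.Finite) {X : Set α} (hXE : X ⊆ M.E)
    (hX : InjOn c X) (hXr : X.ncard = rk M + 1) :
    (∃ C ⊆ X, RainbowCircuit M c C ∧ C.ncard ≤ rk M) ∨ Circuit M X := by
  obtain ⟨C, hCX, hC⟩ := exists_rainbowCircuit_subset_of_rk_lt hfin hXE hX (by omega)
  obtain hss | rfl := hCX.ssubset_or_eq
  · exact .inl ⟨C, hCX, hC, by have := ncard_lt_ncard hss (hfin.subset hXE); omega⟩
  · exact .inr hC.1

lemma exists_short_rainbowCircuit_of_transversal (hM : IsBinary M) (hfin : M.E.Finite)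
    (hr : 1 ≤ rk M) {R : Set α} (hRE : R ⊆ M.E) (hR : InjOn c R) (hRr : R.ncard = rk M)
    {x y : α} (hxE : x ∈ M.E) (hyE : y ∈ M.E) (hxy : x ≠ y) (hcxy : c x = c y)
    (hcR : c x ∉ c '' R) (hnc : ¬ Circuit M {x, y}) :
    ∃ C ⊆ insert x (insert y R), RainbowCircuit M c C ∧ C.ncard ≤ rk M := by
  obtain ⟨n, φ, hφ⟩ : ∃ n, ∃ φ : α → Fin n → ZMod 2, IsBinaryRep M φ := hM
  have hRfin := hfin.subset hRE
  have hext : ∀ z ∈ M.E, c z ∉ c '' R →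
      (∃ C ⊆ insert z R, RainbowCircuit M c C ∧ C.ncard ≤ rk M) ∨ Circuit M (insert z R) := by
    intro z hz hzR
    have hzR' : z ∉ R := fun h => hzR (mem_image_of_mem c h)
    exact exists_short_rainbowCircuit_or_circuit hfin (insert_subset hz hRE)
      ((injOn_insert hzR').2 ⟨hR, hzR⟩) (by rw [ncard_insert_of_notMem hzR' hRfin, hRr])
  obtain ⟨C, hC, h⟩ | hx := hext x hxE hcR
  · exact ⟨C, hC.trans (insert_subset_insert (subset_insert _ _)), h⟩
  obtain ⟨C, hC, h⟩ | hy := hext y hyE (hcxy ▸ hcR)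
  · exact ⟨C, hC.trans (subset_insert _ _), h⟩
  have hdep : M.Dep {x, y} := hφ.dep_pair_of_circuit_insert hRfin
    (fun h => hcR (mem_image_of_mem c h)) (fun h => hcR (hcxy ▸ mem_image_of_mem c h)) hxy hx hy
  -- `{x, y}` is dependent but not a circuit, so one of `x`, `y` is a loop
  obtain ⟨C, hCxy, hC⟩ := exists_circuit_ssubset_of_dep hdep hnc
  have hC1 : C.ncard ≤ 1 := by
    have := ncard_lt_ncard hCxy (toFinite _)
    rw [ncard_pair hxy] at this
    omega
  refine ⟨C, hCxy.subset.trans (insert_subset_insert (singleton_subset_iff.2 (mem_insert _ _))),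
    ⟨hC, Subsingleton.injOn ((ncard_le_one ((toFinite _).subset hCxy.subset)).1 hC1) c⟩,
    hC1.trans hr⟩

end rainbow

section colouring

variable {M : Matroid α} {c : α → κ}

lemma ncard_ground_eq_two_mul (hfin : M.E.Finite)
    (huni : ∀ s ∈ c '' M.E, (colourClass M c s).ncard = 2) :
    M.E.ncard = 2 * (c '' M.E).ncard := by
  have hE : ⋃ s ∈ c '' M.E, colourClass M c s = M.E := by
    ext a
    simpa [colourClass] using fun ha => ⟨a, ha, rfl⟩
  have hdisj : (c '' M.E).PairwiseDisjoint (colourClass M c) := fun s _ t _ hst =>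
    disjoint_left.2 fun a ha hb => hst (ha.2.symm.trans hb.2)
  calc M.E.ncard = ∑ᶠ s ∈ c '' M.E, (colourClass M c s).ncard := by
        rw [← (hfin.image c).ncard_biUnion (s := colourClass M c)
          (fun s _ => hfin.subset (sep_subset _ _)) hdisj, hE]
    _ = ∑ᶠ s ∈ c '' M.E, 2 * 1 := finsum_mem_congr rfl huni
    _ = 2 * (c '' M.E).ncard := by rw [← mul_finsum_mem, finsum_one]

lemma exists_rainbow_transversal (huni : ∀ s ∈ c '' M.E, (colourClass M c s).ncard = 2)
    {P : Set α} (hP : InjOn c P) (s₀ : κ) :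
    ∃ R ⊆ M.E \ P, InjOn c R ∧ c '' R = c '' M.E \ {s₀} := by
  obtain ⟨R, hRY, hR⟩ := exists_subset_bijOn (M.E \ P ∩ c ⁻¹' {s₀}ᶜ) c
  refine ⟨R, hRY.trans inter_subset_left, hR.injOn, hR.image_eq.trans ?_⟩
  ext s
  refine ⟨?_, fun ⟨hs, hs₀⟩ => ?_⟩
  · rintro ⟨a, ⟨⟨haE, -⟩, hs₀⟩, rfl⟩
    exact ⟨mem_image_of_mem c haE, hs₀⟩
  obtain ⟨a, b, hab, hcl⟩ := ncard_eq_two.1 (huni s hs)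
  have hmem : a ∈ colourClass M c s ∧ b ∈ colourClass M c s := by simp [hcl]
  -- the two elements of a colour class share their colour, so they cannot both lie in `P`
  obtain ⟨z, hz, hzP⟩ : ∃ z ∈ colourClass M c s, z ∉ P := by
    by_contra! h
    exact hab (hP (h a hmem.1) (h b hmem.2) (hmem.1.2.trans hmem.2.2.symm))
  exact ⟨z, ⟨⟨hz.1, hzP⟩, by simpa [hz.2] using hs₀⟩, hz.2⟩

end colouring

/-- a coloured binary matroid of rank at least `3` with `2(r(M)+1)`
elements, a 2-uniform colouring, at least three colour classes consisting of two
non-parallel elements, and containing a rainbow 2-circuit, has a short rainbow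
circuit pair. -/
theorem srcp_of_rainbow_digon (M : Matroid α) (hM : IsBinary M)
    (hfin : M.E.Finite) (hrk : 3 ≤ rk M)
    (hcard : M.E.ncard = 2 * (rk M + 1)) (c : α → κ)
    (huni : ∀ s ∈ c '' M.E, (colourClass M c s).ncard = 2)
    (hnp : ∃ T : Set κ, T ⊆ c '' M.E ∧ 3 ≤ T.ncard ∧
      ∀ s ∈ T, ¬ Circuit M (colourClass M c s))
    (hdigon : ∃ C, Circuit M C ∧ C.ncard = 2 ∧ Set.InjOn c C) :
    ∃ C₁ C₂, SRCP M c C₁ C₂ := by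
  obtain ⟨D, hD, hD2, hDc⟩ := hdigon
  obtain ⟨T, hTE, hT3, hTnc⟩ := hnp
  have hDfin : D.Finite := finite_of_ncard_pos (by omega)
  obtain ⟨s₀, hs₀T, hs₀D⟩ : ∃ s₀ ∈ T, s₀ ∉ c '' D := exists_mem_notMem_of_ncard_lt_ncard
    (by have := ncard_image_le (f := c) hDfin; omega) (hDfin.image c)
  obtain ⟨x, y, hxy, hxyc⟩ := ncard_eq_two.1 (huni s₀ (hTE hs₀T))
  have hx : x ∈ colourClass M c s₀ := hxyc ▸ mem_insert _ _
  have hy : y ∈ colourClass M c s₀ := hxyc ▸ mem_insert_of_mem _ rfl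
  obtain ⟨R, hRD, hRc, hRim⟩ := exists_rainbow_transversal huni hDc s₀
  have hRr : R.ncard = rk M := by
    have := ncard_ground_eq_two_mul hfin huni
    rw [← hRc.ncard_image, hRim, ncard_sdiff_singleton_of_mem (hTE hs₀T)]
    omega
  obtain ⟨C, hCR, hC, hCr⟩ := exists_short_rainbowCircuit_of_transversal hM hfin (by omega)
    (hRD.trans sdiff_subset) hRc hRr hx.1 hy.1 hxy (hx.2.trans hy.2.symm) (by simp [hRim, hx.2])
    (hxyc ▸ hTnc s₀ hs₀T)
  have hxD : x ∉ D := fun h => hs₀D (hx.2 ▸ mem_image_of_mem c h)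
  have hyD : y ∉ D := fun h => hs₀D (hy.2 ▸ mem_image_of_mem c h)
  refine ⟨D, C, ⟨hD, hDc⟩, hC, disjoint_of_subset_right hCR ?_, by omega⟩
  simp only [disjoint_insert_right]
  exact ⟨hxD, hyD, disjoint_sdiff_right.mono_right hRD⟩
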